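/- Let f be a consensus (location) function on the n-cube Q_n. Then f equals the anti-median function AM if and only if f satisfies the Translation property (T), the Minority property (Min), and the Restricted Range property (RR). -/

import Mathlib

/-- A vertex of the n-cube `Q_n`: an element of `{0,1}^n`. -/
abbrev Vertex (n : ℕ) := Fin n → Bool

/-- Coordinatewise addition modulo 2 (`u ⊕ v`). -/
def vxor {n : ℕ} (u v : Vertex n) : Vertex n := fun i => xor (u i) (v i)

/-- A profile: a nonempty finite sequence of vertices of `Q_n`. -/
def Profile (n : ℕ) := { l : List (Vertex n) // l ≠ [] }

/-- Translation of a profile: `π ⊕ v = (x₁ ⊕ v, …, x_k ⊕ v)`. -/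
def pxor {n : ℕ} (π : Profile n) (v : Vertex n) : Profile n :=
  ⟨π.1.map (fun x => vxor x v), by simpa using π.2⟩

/-- The Translation property (T) for a consensus function. -/
def Translation {n : ℕ} (f : Profile n → Set (Vertex n)) : Prop :=
  ∀ (π : Profile n) (u v : Vertex n), u ∈ f π → vxor u v ∈ f (pxor π v)

/-- Hamming distance on the n-cube. -/
def cubeDist {n : ℕ} (u v : Vertex n) : ℕ := hammingDist u v

/-- The all-zeros vertex `𝟎`. -/
def zeroV (n : ℕ) : Vertex n := fun _ => false

/-- `‖u‖ = d(𝟎,u)`, the number of ones in `u`. -/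
def vnorm {n : ℕ} (u : Vertex n) : ℕ := cubeDist (zeroV n) u

/-- `‖π‖ = max{‖x₁‖,…,‖x_k‖}`. -/
def pnorm {n : ℕ} (π : Profile n) : ℕ := (π.1.map vnorm).foldr max 0

/-- Eccentricity `e(x, π) = max_j d(x, x_j)`. -/
def ecc {n : ℕ} (π : Profile n) (x : Vertex n) : ℕ :=
  (π.1.map (fun y => cubeDist x y)).foldr max 0

/-- The center function. -/
def Cen {n : ℕ} (π : Profile n) : Set (Vertex n) :=
  {x | ∀ y : Vertex n, ecc π x ≤ ecc π y}

/-- Status `S_π(x) = Σ_j d(x, x_j)`. -/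
def status {n : ℕ} (π : Profile n) (x : Vertex n) : ℕ :=
  (π.1.map (fun y => cubeDist x y)).sum

/-- The median function. -/
def Med {n : ℕ} (π : Profile n) : Set (Vertex n) :=
  {x | ∀ y : Vertex n, status π x ≤ status π y}

/-- The anti-median function. -/
def AM {n : ℕ} (π : Profile n) : Set (Vertex n) :=
  {x | ∀ y : Vertex n, status π y ≤ status π x}

/-- `Σ_{j=1}^k xᵢ^j`: the number of profile entries with a 1 in coordinate `i`. -/
def cnt {n : ℕ} (π : Profile n) (i : Fin n) : ℕ :=
  (π.1.map (fun x => if x i then 1 else 0)).sum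

/-- The majority vertex `Maj(π)`: `wᵢ = 1` iff `Σ_j xᵢ^j > k/2`. -/
def Maj {n : ℕ} (π : Profile n) : Vertex n :=
  fun i => decide (π.1.length < 2 * cnt π i)

/-- The minority vertex `Min(π)`: `mᵢ = 1` iff `Σ_j xᵢ^j < k/2`. -/
def MinV {n : ℕ} (π : Profile n) : Vertex n :=
  fun i => decide (2 * cnt π i < π.1.length)

/-- The Condorcet score `Cs(π)`. -/
def Cs {n : ℕ} (π : Profile n) : ℕ :=
  (Finset.univ.filter (fun i : Fin n => 2 * cnt π i = π.1.length)).card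

/-- The Majority property (Maj). -/
def MajProp {n : ℕ} (f : Profile n → Set (Vertex n)) : Prop :=
  ∀ π : Profile n, Maj π ∈ f π

/-- The Minority property (Min). -/
def MinProp {n : ℕ} (f : Profile n → Set (Vertex n)) : Prop :=
  ∀ π : Profile n, MinV π ∈ f π

/-- The Restricted Range property (RR): `|f(π)| ≤ 2^{Cs(π)}`. -/
def RestrictedRange {n : ℕ} (f : Profile n → Set (Vertex n)) : Prop :=
  ∀ π : Profile n, (f π).ncard ≤ 2 ^ Cs π

/-- The `ℓ_p` status `ℓ_pS_π(x) = Σ_j d(x,x_j)^p`. -/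
noncomputable def lpStatus {n : ℕ} (p : ℝ) (π : Profile n) (x : Vertex n) : ℝ :=
  (π.1.map (fun y => (cubeDist x y : ℝ) ^ p)).sum

/-- The `ℓ_p`-function. -/
noncomputable def lpFun {n : ℕ} (p : ℝ) (π : Profile n) : Set (Vertex n) :=
  {x | ∀ y : Vertex n, lpStatus p π x ≤ lpStatus p π y}

/-- The `p`-Characteristic `Char_p(π) = Σ_j ‖x_j‖^p`. -/
noncomputable def Charp {n : ℕ} (p : ℝ) (π : Profile n) : ℝ :=
  (π.1.map (fun x => (vnorm x : ℝ) ^ p)).sum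

/-- Concatenation of profiles `π₁π₂`. -/
def pconcat {n : ℕ} (π₁ π₂ : Profile n) : Profile n :=
  ⟨π₁.1 ++ π₂.1, by simp [π₁.2]⟩

/-- The profile of length one consisting of the single vertex `x`. -/
def singleP {n : ℕ} (x : Vertex n) : Profile n := ⟨[x], by simp⟩

/-- The Consistency property (C). -/
def Consistency {n : ℕ} (f : Profile n → Set (Vertex n)) : Prop :=
  ∀ π₁ π₂ : Profile n, (f π₁ ∩ f π₂).Nonempty → f (pconcat π₁ π₂) = f π₁ ∩ f π₂

/-!
The status is separable: `S_π(x) = Σᵢ sᵢ(xᵢ)`, where `sᵢ(b)` counts the voters disagreeing with `b`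
in coordinate `i`. Hence `x` is an anti-median iff every `xᵢ` maximizes `sᵢ`, i.e. `xᵢ` is the
minority bit whenever coordinate `i` is not a tie. So `AM(π)` is a subcube of `2^{Cs(π)}` vertices
containing `Min(π)`, and it is translation invariant because the Hamming distance is.

Conversely, let `f` satisfy (T) and (Min), and let `u ∈ AM(π)`. In `π ⊕ u` no coordinate has a
strict majority of zeros, so `Min(π ⊕ u) = 𝟎`; translating `𝟎 ∈ f(π ⊕ u)` back by `u` gives
`u ∈ f(π)`. Thus `AM(π) ⊆ f(π)`, and (RR) forces equality.
-/

theorem forall_sum_le_sum_iff {ι M : Type*} [Fintype ι] {α : ι → Type*}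
    [AddCommMonoid M] [PartialOrder M] [IsOrderedCancelAddMonoid M]
    (g : ∀ i, α i → M) (x : ∀ i, α i) :
    (∀ y : ∀ i, α i, ∑ i, g i (y i) ≤ ∑ i, g i (x i)) ↔ ∀ i a, g i a ≤ g i (x i) := by
  classical
  refine ⟨fun h i a => ?_, fun h y => Finset.sum_le_sum fun i _ => h i (y i)⟩
  have hi := h (Function.update x i a)
  simp only [Function.apply_update (f := g), Finset.sum_update_of_mem (Finset.mem_univ i),
    ← Finset.add_sum_erase _ _ (Finset.mem_univ i), Finset.sdiff_singleton_eq_erase] at hi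
  exact le_of_add_le_add_right hi

theorem ncard_setOf_forall_imp_eq {ι α : Type*} [Fintype ι] [Fintype α]
    (p : ι → Prop) [DecidablePred p] (m : ι → α) :
    {x : ι → α | ∀ i, p i → x i = m i}.ncard =
      Fintype.card α ^ (Finset.univ.filter fun i => ¬ p i).card := by
  classical
  have hpi : {x : ι → α | ∀ i, p i → x i = m i}
      = Fintype.piFinset fun i => if p i then {m i} else Finset.univ := by
    ext x
    rw [Finset.mem_coe, Fintype.mem_piFinset]
    refine forall_congr' fun i => ?_
    split_ifs <;> simp [*]
  rw [hpi, Set.ncard_coe_finset, Fintype.card_piFinset]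
  simp [apply_ite Finset.card, Finset.prod_ite]

section Cube

variable {n : ℕ}

theorem cubeDist_vxor (u v w : Vertex n) : cubeDist (vxor u w) (vxor v w) = cubeDist u v :=
  hammingDist_comp (fun i b => xor b (w i)) fun _ _ _ => Bool.xor_left_inj.mp

theorem cubeDist_eq_sum (x y : Vertex n) :
    cubeDist x y = ∑ i, if y i = x i then 0 else 1 := by
  simp only [cubeDist, hammingDist, Finset.card_filter, ne_comm (a := x _), ite_not]

theorem vxor_vxor_cancel_right (x v : Vertex n) : vxor (vxor x v) v = x := by
  funext i
  simp [vxor]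

theorem zeroV_vxor (u : Vertex n) : vxor (zeroV n) u = u := by
  funext i
  simp [vxor, zeroV]

theorem pxor_pxor_cancel_right (π : Profile n) (v : Vertex n) : pxor (pxor π v) v = π :=
  Subtype.ext <| by simp [pxor, Function.comp_def, vxor_vxor_cancel_right]

theorem status_pxor (π : Profile n) (v y : Vertex n) :
    status (pxor π v) y = status π (vxor y v) := by
  simp only [status, pxor, List.map_map, Function.comp_def]
  congr 1
  refine List.map_congr_left fun x _ => ?_
  rw [← cubeDist_vxor (vxor y v) x v, vxor_vxor_cancel_right]

theorem AM_translation : Translation (AM (n := n)) := by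
  intro π u v hu y
  rw [status_pxor, status_pxor, vxor_vxor_cancel_right]
  exact hu (vxor y v)

def coordStatus (π : Profile n) (i : Fin n) (b : Bool) : ℕ :=
  (π.1.map fun y => if y i = b then 0 else 1).sum

theorem status_eq_sum_coordStatus (π : Profile n) (x : Vertex n) :
    status π x = ∑ i, coordStatus π i (x i) := by
  simp only [status, coordStatus]
  induction π.1 with
  | nil => simp
  | cons y l ih =>
    rw [List.map_cons, List.sum_cons, ih, cubeDist_eq_sum, ← Finset.sum_add_distrib]
    rfl

theorem coordStatus_false (π : Profile n) (i : Fin n) : coordStatus π i false = cnt π i := by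
  simp only [coordStatus, cnt]
  congr 1
  refine List.map_congr_left fun y _ => ?_
  cases y i <;> rfl

theorem coordStatus_add_coordStatus_not (π : Profile n) (i : Fin n) (b : Bool) :
    coordStatus π i b + coordStatus π i (!b) = π.1.length := by
  simp only [coordStatus]
  cases b <;> induction π.1 with
  | nil => simp
  | cons y l ih =>
    simp only [List.map_cons, List.sum_cons, List.length_cons]
    cases y i <;> simp at ih ⊢ <;> omega

theorem forall_coordStatus_le_iff (π : Profile n) (i : Fin n) (c : Bool) :
    (∀ b, coordStatus π i b ≤ coordStatus π i c) ↔
      (2 * cnt π i ≠ π.1.length → c = MinV π i) := by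
  have hsum := coordStatus_add_coordStatus_not π i false
  rw [Bool.not_false, coordStatus_false] at hsum
  cases c <;> simp only [Bool.forall_bool, MinV, coordStatus_false] <;>
    constructor <;> intro h <;> simp_all <;> omega

theorem mem_AM_iff_forall_coordStatus_le (π : Profile n) (x : Vertex n) :
    x ∈ AM π ↔ ∀ i b, coordStatus π i b ≤ coordStatus π i (x i) := by
  simp only [AM, Set.mem_ofPred_eq, status_eq_sum_coordStatus]
  exact forall_sum_le_sum_iff (coordStatus π) x

theorem mem_AM_iff (π : Profile n) (x : Vertex n) :
    x ∈ AM π ↔ ∀ i, 2 * cnt π i ≠ π.1.length → x i = MinV π i := by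
  rw [mem_AM_iff_forall_coordStatus_le]
  exact forall_congr' fun i => forall_coordStatus_le_iff π i (x i)

theorem MinV_mem_AM (π : Profile n) : MinV π ∈ AM π :=
  (mem_AM_iff π _).2 fun _ _ => rfl

theorem ncard_AM (π : Profile n) : (AM π).ncard = 2 ^ Cs π := by
  have hAM : AM π = {x | ∀ i, 2 * cnt π i ≠ π.1.length → x i = MinV π i} :=
    Set.ext (mem_AM_iff π)
  simp only [hAM, ncard_setOf_forall_imp_eq, Fintype.card_bool, not_not, Cs]

theorem cnt_pxor (π : Profile n) (u : Vertex n) (i : Fin n) :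
    cnt (pxor π u) i = coordStatus π i (u i) := by
  simp only [cnt, pxor, coordStatus, List.map_map, Function.comp_def, vxor]
  congr 1
  refine List.map_congr_left fun y _ => ?_
  by_cases y i <;> by_cases u i <;> simp_all

theorem MinV_pxor_of_mem_AM {π : Profile n} {u : Vertex n} (hu : u ∈ AM π) :
    MinV (pxor π u) = zeroV n := by
  funext i
  have hmax := (mem_AM_iff_forall_coordStatus_le π u).1 hu i (!(u i))
  have hsum := coordStatus_add_coordStatus_not π i (u i)
  have hlen : (pxor π u).1.length = π.1.length := List.length_map _
  simp only [MinV, zeroV, cnt_pxor, hlen, decide_eq_false_iff_not, not_lt]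
  omega

theorem AM_subset_of_translation_of_minProp {f : Profile n → Set (Vertex n)}
    (hT : Translation f) (hMin : MinProp f) (π : Profile n) : AM π ⊆ f π := by
  intro u hu
  have h := hT (pxor π u) _ u (hMin (pxor π u))
  rwa [pxor_pxor_cancel_right, MinV_pxor_of_mem_AM hu, zeroV_vxor] at h

end Cube

theorem stmt17_general {n : ℕ} (f : Profile n → Set (Vertex n)) :
    f = AM ↔ (Translation f ∧ MinProp f ∧ RestrictedRange f) := by
  constructor
  · rintro rfl
    exact ⟨AM_translation, MinV_mem_AM, fun π => (ncard_AM π).le⟩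
  · rintro ⟨hT, hMin, hRR⟩
    funext π
    refine (Set.eq_of_subset_of_ncard_le (AM_subset_of_translation_of_minProp hT hMin π) ?_
      (Set.toFinite _)).symm
    exact (hRR π).trans (ncard_AM π).ge

/-- `f = AM` iff `f` satisfies (T), (Min), and (RR). -/
theorem stmt17 {n : ℕ} (f : Profile n → Set (Vertex n))
    (hf : ∀ π : Profile n, (f π).Nonempty) :
    f = AM ↔ (Translation f ∧ MinProp f ∧ RestrictedRange f) :=
  stmt17_general f
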